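/- arXiv:1304.2565 — 9 statements merged into one kernel-verified Lean document; each statement's English description precedes it below -/
import Mathlib

section
/- Let a, b, c ∈ ℂ with (a²−4)(b²−4)(c²−4)(a²+b²+c²−abc−4) ≠ 0. Then the Kuribayashi quartic curve F = 0 is nonsingular: for every (x,y,z) ∈ ℂ³ with (x,y,z) ≠ (0,0,0), the three partial derivatives ∂F/∂x = 4x³+2axy²+2bxz², ∂F/∂y = 4y³+2ax²y+2cyz², ∂F/∂z = 4z³+2bx²z+2cy²z do not all vanish at (x,y,z). -/
/-- The Kuribayashi quartic `F(x,y,z) = x⁴+y⁴+z⁴+a x²y² + b x²z² + c y²z²`. -/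
noncomputable def F (a b c x y z : ℂ) : ℂ :=
  x ^ 4 + y ^ 4 + z ^ 4 + a * x ^ 2 * y ^ 2 + b * x ^ 2 * z ^ 2 + c * y ^ 2 * z ^ 2

/-!
The three partial derivatives are `2x·L₁`, `2y·L₂`, `2z·L₃`, where `(L₁, L₂, L₃)` is the
linear system with symmetric matrix `M = [[2,a,b],[a,2,c],[b,c,2]]` applied to `(x², y², z²)`.
At a singular point, the squares of the nonzero coordinates form a kernel vector of the
principal submatrix of `M` on those indices. The principal minors of `M` are `2`, `4 - a²`,
`4 - b²`, `4 - c²` and `-2(a² + b² + c² - abc - 4)`, all nonzero, so all squares vanish.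
-/

section KuribayashiSystem

variable {R : Type*} [CommRing R] [IsDomain R]

lemma sq_eq_zero_or_of_mul_eq_zero {t e : R} (h : t * e = 0) : t ^ 2 = 0 ∨ e = 0 := by
  rcases mul_eq_zero.mp h with ht | he
  · exact .inl (by rw [ht]; ring)
  · exact .inr he

lemma eq_zero_of_two_mul_eq_zero [NeZero (2 : R)] {u : R} (h : 2 * u = 0) : u = 0 :=
  (mul_eq_zero.mp h).resolve_left two_ne_zero

lemma eq_zero_and_eq_zero_of_system_two {a s t : R} (ha : a ^ 2 - 4 ≠ 0)
    (h₁ : 2 * s + a * t = 0) (h₂ : a * s + 2 * t = 0) : s = 0 ∧ t = 0 := by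
  refine ⟨(mul_eq_zero.mp (?_ : (a ^ 2 - 4) * s = 0)).resolve_left ha,
    (mul_eq_zero.mp (?_ : (a ^ 2 - 4) * t = 0)).resolve_left ha⟩
  · linear_combination a * h₂ - 2 * h₁
  · linear_combination a * h₁ - 2 * h₂

/-- The coefficients are the rows of the adjugate of `[[2,a,b],[a,2,c],[b,c,2]]`. -/
lemma eq_zero_of_system_three [NeZero (2 : R)] {a b c u v w : R}
    (hd : a ^ 2 + b ^ 2 + c ^ 2 - a * b * c - 4 ≠ 0)
    (h₁ : 2 * u + a * v + b * w = 0) (h₂ : a * u + 2 * v + c * w = 0)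
    (h₃ : b * u + c * v + 2 * w = 0) : u = 0 ∧ v = 0 ∧ w = 0 := by
  have hd₂ : 2 * (a ^ 2 + b ^ 2 + c ^ 2 - a * b * c - 4) ≠ 0 := mul_ne_zero two_ne_zero hd
  refine ⟨(mul_eq_zero.mp (?_ : _ * u = 0)).resolve_left hd₂,
    (mul_eq_zero.mp (?_ : _ * v = 0)).resolve_left hd₂,
    (mul_eq_zero.mp (?_ : _ * w = 0)).resolve_left hd₂⟩
  · linear_combination (c ^ 2 - 4) * h₁ + (2 * a - b * c) * h₂ + (2 * b - a * c) * h₃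
  · linear_combination (2 * a - b * c) * h₁ + (b ^ 2 - 4) * h₂ + (2 * c - a * b) * h₃
  · linear_combination (2 * b - a * c) * h₁ + (2 * c - a * b) * h₂ + (a ^ 2 - 4) * h₃

theorem eq_zero_of_kuribayashi_system [NeZero (2 : R)] {a b c u v w : R}
    (ha : a ^ 2 - 4 ≠ 0) (hb : b ^ 2 - 4 ≠ 0) (hc : c ^ 2 - 4 ≠ 0)
    (hd : a ^ 2 + b ^ 2 + c ^ 2 - a * b * c - 4 ≠ 0)
    (hu : u = 0 ∨ 2 * u + a * v + b * w = 0) (hv : v = 0 ∨ a * u + 2 * v + c * w = 0)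
    (hw : w = 0 ∨ b * u + c * v + 2 * w = 0) : u = 0 ∧ v = 0 ∧ w = 0 := by
  rcases hu with hu₀ | hu <;> rcases hv with hv₀ | hv <;> rcases hw with hw₀ | hw <;>
    subst_vars
  · exact ⟨rfl, rfl, rfl⟩
  · exact ⟨rfl, rfl, eq_zero_of_two_mul_eq_zero (by linear_combination hw)⟩
  · exact ⟨rfl, eq_zero_of_two_mul_eq_zero (by linear_combination hv), rfl⟩
  · obtain ⟨hv₀, hw₀⟩ := eq_zero_and_eq_zero_of_system_two (s := v) (t := w) hc
      (by linear_combination hv) (by linear_combination hw)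
    exact ⟨rfl, hv₀, hw₀⟩
  · exact ⟨eq_zero_of_two_mul_eq_zero (by linear_combination hu), rfl, rfl⟩
  · obtain ⟨hu₀, hw₀⟩ := eq_zero_and_eq_zero_of_system_two (s := u) (t := w) hb
      (by linear_combination hu) (by linear_combination hw)
    exact ⟨hu₀, rfl, hw₀⟩
  · obtain ⟨hu₀, hv₀⟩ := eq_zero_and_eq_zero_of_system_two (s := u) (t := v) ha
      (by linear_combination hu) (by linear_combination hv)
    exact ⟨hu₀, hv₀, rfl⟩
  · exact eq_zero_of_system_three hd hu hv hw

end KuribayashiSystem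

/-- If `(a²−4)(b²−4)(c²−4)(a²+b²+c²−abc−4) ≠ 0`, then the Kuribayashi quartic is
nonsingular: at no nonzero point of `ℂ³` do all three partial derivatives of `F` vanish. -/
theorem kuribayashi_nonsingular (a b c : ℂ)
    (h : (a ^ 2 - 4) * (b ^ 2 - 4) * (c ^ 2 - 4) *
      (a ^ 2 + b ^ 2 + c ^ 2 - a * b * c - 4) ≠ 0) :
    ∀ x y z : ℂ, (x, y, z) ≠ (0, 0, 0) →
      ¬ (4 * x ^ 3 + 2 * a * x * y ^ 2 + 2 * b * x * z ^ 2 = 0 ∧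
         4 * y ^ 3 + 2 * a * x ^ 2 * y + 2 * c * y * z ^ 2 = 0 ∧
         4 * z ^ 3 + 2 * b * x ^ 2 * z + 2 * c * y ^ 2 * z = 0) := by
  intro x y z hne ⟨hx, hy, hz⟩
  obtain ⟨⟨⟨ha, hb⟩, hc⟩, hd⟩ := by simpa only [mul_ne_zero_iff] using h
  obtain ⟨hx₀, hy₀, hz₀⟩ := eq_zero_of_kuribayashi_system ha hb hc hd
    (sq_eq_zero_or_of_mul_eq_zero (e := 2 * x ^ 2 + a * y ^ 2 + b * z ^ 2)
      (by linear_combination hx / 2))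
    (sq_eq_zero_or_of_mul_eq_zero (e := a * x ^ 2 + 2 * y ^ 2 + c * z ^ 2)
      (by linear_combination hy / 2))
    (sq_eq_zero_or_of_mul_eq_zero (e := b * x ^ 2 + c * y ^ 2 + 2 * z ^ 2)
      (by linear_combination hz / 2))
  rw [pow_eq_zero_iff two_ne_zero] at hx₀ hy₀ hz₀
  exact hne (by rw [hx₀, hy₀, hz₀])
end

section
/- Let a, b, c ∈ ℂ with c² ≠ 4, and let y ∈ ℂ satisfy y⁴ + cy² + 1 = 0 (so that the point [0:y:1] lies on the curve C_{a,b,c}). Then H_F(0,y,1) = 0 if and only if ay² + b = 0. -/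
/-- The Hessian determinant of the Kuribayashi quartic: the determinant of the
3×3 matrix of second partial derivatives of `F`. -/
noncomputable def HF (a b c x y z : ℂ) : ℂ :=
  Matrix.det
    !![12 * x ^ 2 + 2 * a * y ^ 2 + 2 * b * z ^ 2, 4 * a * x * y, 4 * b * x * z;
       4 * a * x * y, 12 * y ^ 2 + 2 * a * x ^ 2 + 2 * c * z ^ 2, 4 * c * y * z;
       4 * b * x * z, 4 * c * y * z, 12 * z ^ 2 + 2 * b * x ^ 2 + 2 * c * y ^ 2]

theorem HF_zero_left (a b c y z : ℂ) :
    HF a b c 0 y z =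
      24 * (a * y ^ 2 + b * z ^ 2) * (2 * c * (y ^ 4 + z ^ 4) + (12 - c ^ 2) * y ^ 2 * z ^ 2) := by
  simp only [HF, Matrix.det_fin_three, Matrix.of_apply, Matrix.cons_val', Matrix.cons_val_zero,
    Matrix.cons_val_one, Matrix.cons_val, Matrix.cons_val_fin_one]
  ring

theorem HF_zero_left_of_F_eq_zero {a b c y z : ℂ} (h : F a b c 0 y z = 0) :
    HF a b c 0 y z = 72 * (4 - c ^ 2) * y ^ 2 * z ^ 2 * (a * y ^ 2 + b * z ^ 2) := by
  unfold F at h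
  rw [HF_zero_left]
  linear_combination 48 * c * (a * y ^ 2 + b * z ^ 2) * h

/-- For a point `[0:y:1]` on the Kuribayashi quartic (with `c² ≠ 4`), the Hessian vanishes
there iff `a y² + b = 0`. -/
theorem hessian_zero_iff_on_x_eq_zero (a b c y : ℂ) (hc : c ^ 2 ≠ 4)
    (hy : y ^ 4 + c * y ^ 2 + 1 = 0) :
    HF a b c 0 y 1 = 0 ↔ a * y ^ 2 + b = 0 := by
  have hF : F a b c 0 y 1 = 0 := by
    unfold F
    linear_combination hy
  have hy0 : y ≠ 0 := by
    rintro rfl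
    norm_num at hy
  have hc4 : (4 : ℂ) - c ^ 2 ≠ 0 := sub_ne_zero.mpr hc.symm
  rw [HF_zero_left_of_F_eq_zero hF]
  simp [hc4, hy0]
end

section
/- Let a, b, c ∈ ℂ with b² ≠ 4, and let x ∈ ℂ satisfy x⁴ + bx² + 1 = 0 (so that the point [x:0:1] lies on the curve C_{a,b,c}). Then H_F(x,0,1) = 0 if and only if ax² + c = 0. -/
/-! At `y = 0` the Hessian matrix is block diagonal: the `y`-row and `y`-column reduce to the
entry `2(a x² + c)`, so `H_F(x,0,1)` is that entry times the `xz`-minor. On the curve the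
`xz`-minor simplifies to `36 (4 - b²) x²`, and neither factor vanishes when `b² ≠ 4`. -/

theorem HF_y_eq_zero (a b c x : ℂ) :
    HF a b c x 0 1 =
      2 * (a * x ^ 2 + c) * ((12 * x ^ 2 + 2 * b) * (12 + 2 * b * x ^ 2) - 16 * b ^ 2 * x ^ 2) := by
  rw [HF, Matrix.det_fin_three]
  simp only [ne_eq, OfNat.ofNat_ne_zero, not_false_eq_true, zero_pow, mul_zero, add_zero, one_pow,
    mul_one, zero_add, Fin.isValue, Matrix.of_apply, Matrix.cons_val', Matrix.cons_val_zero,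
    Matrix.cons_val_fin_one, Matrix.cons_val_one, Matrix.cons_val, sub_zero, zero_mul]
  ring

theorem xz_minor_eq_of_quartic {R : Type*} [CommRing R] {b x : R}
    (hx : x ^ 4 + b * x ^ 2 + 1 = 0) :
    (12 * x ^ 2 + 2 * b) * (12 + 2 * b * x ^ 2) - 16 * b ^ 2 * x ^ 2 = 36 * (4 - b ^ 2) * x ^ 2 := by
  linear_combination 24 * b * hx

theorem ne_zero_of_quartic {R : Type*} [CommRing R] [Nontrivial R] {b x : R}
    (hx : x ^ 4 + b * x ^ 2 + 1 = 0) : x ≠ 0 := by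
  rintro rfl
  simp at hx

/-- For a point `[x:0:1]` on the Kuribayashi quartic (with `b² ≠ 4`), the Hessian vanishes
there iff `a x² + c = 0`. -/
theorem hessian_zero_iff_on_y_eq_zero (a b c x : ℂ) (hb : b ^ 2 ≠ 4)
    (hx : x ^ 4 + b * x ^ 2 + 1 = 0) :
    HF a b c x 0 1 = 0 ↔ a * x ^ 2 + c = 0 := by
  have hb' : (4 : ℂ) - b ^ 2 ≠ 0 := sub_ne_zero.mpr hb.symm
  rw [HF_y_eq_zero, xz_minor_eq_of_quartic hx]
  simp [hb', ne_zero_of_quartic hx]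
end

section
/- Let a, b, c ∈ ℂ with a² ≠ 4, and let x ∈ ℂ satisfy x⁴ + ax² + 1 = 0 (so that the point [x:1:0] lies on the curve C_{a,b,c}). Then H_F(x,1,0) = 0 if and only if bx² + c = 0. -/
/-!
At `z = 0` the Hessian matrix is block diagonal, so `H_F(x,1,0)` is `F_zz = 2(bx² + c)` times
the `2 × 2` minor in `x, y`. On the curve, `x⁴ + 1 = -a x²` turns that minor into
`36 (4 - a²) x²`, which vanishes only if `x = 0` (impossible on the curve) or `a² = 4`.
-/

theorem HF_x_one_zero (a b c x : ℂ) :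
    HF a b c x 1 0 =
      2 * (b * x ^ 2 + c) * ((12 * x ^ 2 + 2 * a) * (12 + 2 * a * x ^ 2) - (4 * a * x) ^ 2) := by
  rw [HF, Matrix.det_fin_three]
  simp only [Matrix.of_apply, Matrix.cons_val', Matrix.cons_val_zero, Matrix.cons_val_one,
    Matrix.cons_val_two, Matrix.head_cons, Matrix.tail_cons, Matrix.empty_val',
    Matrix.cons_val_fin_one, Matrix.head_fin_const]
  ring

theorem HF_x_one_zero_of_quartic {a x : ℂ} (b c : ℂ) (hx : x ^ 4 + a * x ^ 2 + 1 = 0) :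
    HF a b c x 1 0 = 72 * (4 - a ^ 2) * x ^ 2 * (b * x ^ 2 + c) := by
  rw [HF_x_one_zero]
  linear_combination (48 * a * (b * x ^ 2 + c)) * hx

/-- For a point `[x:1:0]` on the Kuribayashi quartic (with `a² ≠ 4`), the Hessian vanishes
there iff `b x² + c = 0`. -/
theorem hessian_zero_iff_on_z_eq_zero (a b c x : ℂ) (ha : a ^ 2 ≠ 4)
    (hx : x ^ 4 + a * x ^ 2 + 1 = 0) :
    HF a b c x 1 0 = 0 ↔ b * x ^ 2 + c = 0 := by
  have hx0 : x ≠ 0 := by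
    rintro rfl
    norm_num at hx
  have ha' : (4 : ℂ) - a ^ 2 ≠ 0 := sub_ne_zero.mpr (Ne.symm ha)
  rw [HF_x_one_zero_of_quartic b c hx]
  simp [ha', hx0]
end

section
/- (Proposition 2.2, first part.) Let a, b, c ∈ ℂ with c² ≠ 4. Then there exists y ∈ ℂ with y⁴ + cy² + 1 = 0 and H_F(0,y,1) = 0 (i.e. a flex point of C_{a,b,c} lies on the line x = 0) if and only if a² + b² − abc = 0. -/
section AlgClosed

variable {K : Type*} [Field K] [IsAlgClosed K]

open Polynomial in
theorem exists_sq_add_mul_add_one_eq_zero (c : K) : ∃ t : K, t ^ 2 + c * t + 1 = 0 := by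
  obtain ⟨t, ht⟩ := IsAlgClosed.exists_root (C 1 * X ^ 2 + C c * X + C 1)
    (by rw [degree_quadratic one_ne_zero]; decide)
  exact ⟨t, by simpa using ht⟩

theorem exists_common_root_quadratic_linear_iff (a b c : K) :
    (∃ t : K, t ^ 2 + c * t + 1 = 0 ∧ a * t + b = 0) ↔ a ^ 2 + b ^ 2 - a * b * c = 0 := by
  constructor
  · rintro ⟨t, hquad, hlin⟩
    linear_combination a ^ 2 * hquad + (b - a * t - a * c) * hlin
  · intro hres
    by_cases ha : a = 0
    · have hb : b = 0 :=
        pow_eq_zero_iff two_ne_zero |>.mp (by linear_combination hres + (b * c - a) * ha)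
      obtain ⟨t, ht⟩ := exists_sq_add_mul_add_one_eq_zero c
      exact ⟨t, ht, by simp [ha, hb]⟩
    · refine ⟨-b / a, ?_, by field_simp; ring⟩
      field_simp
      linear_combination hres

theorem exists_sq_iff (P : K → Prop) : (∃ y : K, P (y ^ 2)) ↔ ∃ t : K, P t :=
  ⟨fun ⟨y, hy⟩ ↦ ⟨y ^ 2, hy⟩, fun ⟨t, ht⟩ ↦
    let ⟨y, hy⟩ := IsAlgClosed.exists_pow_nat_eq t two_pos
    ⟨y, hy ▸ ht⟩⟩

end AlgClosed

theorem HF_zero_left_one_right (a b c y : ℂ) :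
    HF a b c 0 y 1 =
      2 * (a * y ^ 2 + b) * (24 * c * (y ^ 4 + c * y ^ 2 + 1) + 36 * (4 - c ^ 2) * y ^ 2) := by
  rw [HF, Matrix.det_fin_three]
  simp only [Matrix.of_apply, Matrix.cons_val', Matrix.cons_val_zero, Matrix.cons_val_one,
    Matrix.cons_val, Matrix.cons_val_fin_one]
  ring

theorem HF_zero_left_one_right_eq_zero_iff {a b c y : ℂ} (hc : c ^ 2 ≠ 4)
    (hq : y ^ 4 + c * y ^ 2 + 1 = 0) : HF a b c 0 y 1 = 0 ↔ a * y ^ 2 + b = 0 := by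
  have hy : y ≠ 0 := by rintro rfl; norm_num at hq
  have h4 : (4 : ℂ) - c ^ 2 ≠ 0 := sub_ne_zero.mpr hc.symm
  rw [HF_zero_left_one_right, hq]
  simp [hy, h4]

/-- Proposition 2.2, first part: a flex point of `C_{a,b,c}` lies on the line `x = 0`
iff `a² + b² − abc = 0`. -/
theorem flex_on_x_eq_zero_iff (a b c : ℂ) (hc : c ^ 2 ≠ 4) :
    (∃ y : ℂ, y ^ 4 + c * y ^ 2 + 1 = 0 ∧ HF a b c 0 y 1 = 0) ↔
      a ^ 2 + b ^ 2 - a * b * c = 0 := by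
  calc (∃ y : ℂ, y ^ 4 + c * y ^ 2 + 1 = 0 ∧ HF a b c 0 y 1 = 0)
      ↔ ∃ y : ℂ, (y ^ 2) ^ 2 + c * y ^ 2 + 1 = 0 ∧ a * y ^ 2 + b = 0 := by
        refine exists_congr fun y ↦ ?_
        rw [← pow_mul]
        exact and_congr_right (HF_zero_left_one_right_eq_zero_iff hc)
    _ ↔ ∃ t : ℂ, t ^ 2 + c * t + 1 = 0 ∧ a * t + b = 0 :=
        exists_sq_iff fun t ↦ t ^ 2 + c * t + 1 = 0 ∧ a * t + b = 0
    _ ↔ a ^ 2 + b ^ 2 - a * b * c = 0 := exists_common_root_quadratic_linear_iff a b c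
end

section
/- (Proposition 2.2, second part.) Let a, b, c, s, β ∈ ℂ with c² ≠ 4, b ≠ 0, s² = c² − 4, β² = (−c−s)/2 and a = b(c−s)/2. Then β ≠ 0, both β and β⁻¹ are roots of y⁴ + cy² + 1 = 0, and H_F(0,β,1) = 0 and H_F(0,−β,1) = 0, while H_F(0,β⁻¹,1) ≠ 0 and H_F(0,−β⁻¹,1) ≠ 0. That is, exactly the orbit {[0:β:1],[0:−β:1]} consists of flex points of C_{a,b,c} on the line x = 0. -/
/-!
On the line `x = 0` the Hessian factors as
`24 (a y² + b) (2c (y⁴ + c y² + 1) − 3 (c² − 4) y²)`.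
The roots `u₀ = (−c − s)/2` and `u₁ = (−c + s)/2` of `u² + c u + 1` have product `1`, so
`β² = u₀` and `β⁻² = u₁`. The choice `a = b (c − s)/2 = −b/u₀` makes the first factor vanish
exactly when `y² = u₀`. When `y² = u₁` the first factor is `b s (c − s)/2` and the second is
`−3 (c² − 4) u₁`; these are nonzero because `s ≠ 0` (as `c² ≠ 4`) and `s ≠ c` (as `s² = c² − 4`).
-/

theorem HF_zero_y_one (a b c y : ℂ) :
    HF a b c 0 y 1 =
      24 * (a * y ^ 2 + b) * (2 * c * (y ^ 4 + c * y ^ 2 + 1) - 3 * (c ^ 2 - 4) * y ^ 2) := by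
  rw [HF, Matrix.det_fin_three]
  simp only [Matrix.of_apply, Matrix.cons_val', Matrix.cons_val_zero, Matrix.cons_val_one,
    Matrix.cons_val_two, Matrix.empty_val', Matrix.cons_val_fin_one, Matrix.head_cons,
    Matrix.tail_cons, Matrix.head_fin_const]
  ring

section

variable {a b c s y : ℂ}

theorem quartic_eq_zero_of_sq_eq (hs : s ^ 2 = c ^ 2 - 4) (hy : y ^ 2 = (-c - s) / 2) :
    y ^ 4 + c * y ^ 2 + 1 = 0 := by
  linear_combination (y ^ 2 + (-c - s) / 2 + c) * hy + hs / 4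

theorem HF_zero_y_one_eq_zero (hs : s ^ 2 = c ^ 2 - 4) (ha : a = b * (c - s) / 2)
    (hy : y ^ 2 = (-c - s) / 2) : HF a b c 0 y 1 = 0 := by
  have hlin : a * y ^ 2 + b = 0 := by
    linear_combination y ^ 2 * ha + b * (c - s) / 2 * hy + b / 4 * hs
  rw [HF_zero_y_one, hlin, mul_zero, zero_mul]

theorem HF_zero_y_one_eq (hs : s ^ 2 = c ^ 2 - 4) (ha : a = b * (c - s) / 2)
    (hy : y ^ 2 = (-c + s) / 2) :
    HF a b c 0 y 1 = 18 * b * s * (c - s) ^ 2 * (c ^ 2 - 4) := by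
  have hquartic : y ^ 4 + c * y ^ 2 + 1 = 0 :=
    quartic_eq_zero_of_sq_eq (s := -s) (by rwa [neg_sq]) (by rwa [sub_neg_eq_add])
  have hlin : a * y ^ 2 + b = b * s * (c - s) / 2 := by
    linear_combination y ^ 2 * ha + b * (c - s) / 2 * hy + b / 4 * hs
  rw [HF_zero_y_one, hlin, hquartic, hy]
  ring

end

/-- Proposition 2.2, second part: if `c² ≠ 4`, `b ≠ 0`, `s² = c² − 4`, `β² = (−c−s)/2`
and `a = b(c−s)/2`, then exactly the orbit `{[0:β:1],[0:−β:1]}` consists of flex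
points of `C_{a,b,c}` on the line `x = 0`. -/
theorem flex_orbit_on_x_eq_zero (a b c s β : ℂ) (hc : c ^ 2 ≠ 4) (hb : b ≠ 0)
    (hs : s ^ 2 = c ^ 2 - 4) (hβ : β ^ 2 = (-c - s) / 2) (ha : a = b * (c - s) / 2) :
    β ≠ 0 ∧
    β ^ 4 + c * β ^ 2 + 1 = 0 ∧ (β⁻¹) ^ 4 + c * (β⁻¹) ^ 2 + 1 = 0 ∧
    HF a b c 0 β 1 = 0 ∧ HF a b c 0 (-β) 1 = 0 ∧
    HF a b c 0 β⁻¹ 1 ≠ 0 ∧ HF a b c 0 (-β⁻¹) 1 ≠ 0 := by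
  have hprod : β ^ 2 * ((-c + s) / 2) = 1 := by
    rw [hβ]
    linear_combination -hs / 4
  have hβ0 : β ≠ 0 := fun h => by simp [h] at hprod
  have hβinv : β⁻¹ ^ 2 = (-c + s) / 2 := by
    rw [inv_pow]
    exact inv_eq_of_mul_eq_one_right hprod
  have hs0 : s ≠ 0 := by
    rintro rfl
    exact hc (by linear_combination -hs)
  have hcs : c - s ≠ 0 := fun h => by
    have h4 : (4 : ℂ) = 0 := by linear_combination hs + (c + s) * h
    norm_num at h4
  have hnonzero : 18 * b * s * (c - s) ^ 2 * (c ^ 2 - 4) ≠ 0 := by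
    simp [hb, hs0, hcs, sub_eq_zero, hc]
  refine ⟨hβ0, quartic_eq_zero_of_sq_eq hs hβ,
    quartic_eq_zero_of_sq_eq (s := -s) (by rwa [neg_sq]) (by rwa [sub_neg_eq_add]),
    HF_zero_y_one_eq_zero hs ha hβ, HF_zero_y_one_eq_zero hs ha (by rwa [neg_sq]), ?_, ?_⟩
  · rwa [HF_zero_y_one_eq hs ha hβinv]
  · rwa [HF_zero_y_one_eq hs ha (by rwa [neg_sq])]
end

section
/- (Proposition 2.3, second part.) Let a, b, c, t, α ∈ ℂ with b² ≠ 4, c ≠ 0, t² = b² − 4, α² = (−b−t)/2 and a = c(b−t)/2. Then α ≠ 0, both α and α⁻¹ are roots of x⁴ + bx² + 1 = 0, and H_F(α,0,1) = 0 and H_F(−α,0,1) = 0, while H_F(α⁻¹,0,1) ≠ 0 and H_F(−α⁻¹,0,1) ≠ 0. That is, exactly the orbit {[α:0:1],[−α:0:1]} consists of flex points of C_{a,b,c} on the line y = 0. -/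
/-!
On the line `y = 0` the Hessian factors as `(2ax² + 2c)(24bx⁴ + (144 − 12b²)x² + 24b)`, and at a
root of `x⁴ + bx² + 1` the second factor reduces to `36(4 − b²)x²`, which is nonzero when
`b² ≠ 4`. The two values of `x²` at such roots are `α²` and `α⁻² = (−b + t)/2`, and
`a = c(b − t)/2 = −cα⁻²` makes the first factor vanish at `α²`; at `α⁻²` it equals `2c(1 − α⁻⁴)`,
which is nonzero because `α⁻⁴ = 1` would force `b² = 4`.
-/

lemma HF_neg_x (a b c x y z : ℂ) : HF a b c (-x) y z = HF a b c x y z := by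
  simp only [HF, Matrix.det_fin_three, Matrix.of_apply, Matrix.cons_val', Matrix.cons_val_zero,
    Matrix.cons_val_one, Matrix.cons_val_two, Matrix.empty_val', Matrix.cons_val_fin_one,
    Matrix.head_cons, Matrix.tail_cons, Matrix.head_fin_const]
  ring

lemma HF_x_zero_one (a b c x : ℂ) :
    HF a b c x 0 1 =
      (2 * a * x ^ 2 + 2 * c) * (24 * b * x ^ 4 + (144 - 12 * b ^ 2) * x ^ 2 + 24 * b) := by
  simp only [HF, Matrix.det_fin_three, Matrix.of_apply, Matrix.cons_val', Matrix.cons_val_zero,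
    Matrix.cons_val_one, Matrix.cons_val_two, Matrix.empty_val', Matrix.cons_val_fin_one,
    Matrix.head_cons, Matrix.tail_cons, Matrix.head_fin_const]
  ring

lemma HF_x_zero_one_of_root {a b c x : ℂ} (hx : x ^ 4 + b * x ^ 2 + 1 = 0) :
    HF a b c x 0 1 = 72 * (a * x ^ 2 + c) * (4 - b ^ 2) * x ^ 2 := by
  rw [HF_x_zero_one]
  linear_combination (2 * a * x ^ 2 + 2 * c) * 24 * b * hx

lemma pow_four_ne_one_of_root {b x : ℂ} (hx : x ^ 4 + b * x ^ 2 + 1 = 0) (hb : b ^ 2 ≠ 4) :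
    x ^ 4 ≠ 1 := by
  intro h1
  apply hb
  linear_combination (b * x ^ 2 - 2) * (hx - h1) - b ^ 2 * h1

/-- Proposition 2.3, second part: if `b² ≠ 4`, `c ≠ 0`, `t² = b² − 4`, `α² = (−b−t)/2`
and `a = c(b−t)/2`, then exactly the orbit `{[α:0:1],[−α:0:1]}` consists of flex
points of `C_{a,b,c}` on the line `y = 0`. -/
theorem flex_orbit_on_y_eq_zero (a b c t α : ℂ) (hb : b ^ 2 ≠ 4) (hc : c ≠ 0)
    (ht : t ^ 2 = b ^ 2 - 4) (hα : α ^ 2 = (-b - t) / 2) (ha : a = c * (b - t) / 2) :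
    α ≠ 0 ∧
    α ^ 4 + b * α ^ 2 + 1 = 0 ∧ (α⁻¹) ^ 4 + b * (α⁻¹) ^ 2 + 1 = 0 ∧
    HF a b c α 0 1 = 0 ∧ HF a b c (-α) 0 1 = 0 ∧
    HF a b c α⁻¹ 0 1 ≠ 0 ∧ HF a b c (-α⁻¹) 0 1 ≠ 0 := by
  have hprod : α ^ 2 * ((-b + t) / 2) = 1 := by
    rw [hα]; linear_combination (-1 / 4 : ℂ) * ht
  have hα0 : α ≠ 0 := by rintro rfl; simp at hprod
  have hαinv : α⁻¹ ^ 2 = (-b + t) / 2 := by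
    rw [inv_pow]; exact inv_eq_of_mul_eq_one_right hprod
  have hroot : α ^ 4 + b * α ^ 2 + 1 = 0 := by
    linear_combination (α ^ 2 + (b - t) / 2) * hα + (1 / 4 : ℂ) * ht
  have hroot_inv : α⁻¹ ^ 4 + b * α⁻¹ ^ 2 + 1 = 0 := by
    linear_combination (α⁻¹ ^ 2 + (b + t) / 2) * hαinv + (1 / 4 : ℂ) * ht
  have hflex : a * α ^ 2 + c = 0 := by
    rw [ha, hα]; linear_combination (c / 4) * ht
  have hnonflex : a * α⁻¹ ^ 2 + c ≠ 0 := by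
    have h : a * α⁻¹ ^ 2 + c = c * (1 - α⁻¹ ^ 4) := by
      linear_combination α⁻¹ ^ 2 * ha + c * α⁻¹ ^ 2 * hαinv
    rw [h]
    exact mul_ne_zero hc (sub_ne_zero.mpr (pow_four_ne_one_of_root hroot_inv hb).symm)
  have hHF : HF a b c α 0 1 = 0 := by
    rw [HF_x_zero_one_of_root hroot, hflex]; ring
  have hHF_inv : HF a b c α⁻¹ 0 1 ≠ 0 := by
    rw [HF_x_zero_one_of_root hroot_inv]
    exact mul_ne_zero (mul_ne_zero (mul_ne_zero (by norm_num) hnonflex)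
      (sub_ne_zero.mpr (Ne.symm hb))) (pow_ne_zero 2 (inv_ne_zero hα0))
  exact ⟨hα0, hroot, hroot_inv, hHF, (HF_neg_x ..).trans hHF, hHF_inv,
    (HF_neg_x ..).trans_ne hHF_inv⟩
end

section
/- (Proposition 2.5 for the line x = 0.) Let a, b, c ∈ ℂ and let β ∈ ℂ satisfy β⁴ + cβ² + 1 = 0. Then for all x ∈ ℂ, F(x,β,1) = x²·(x² + aβ² + b). Moreover, if in addition aβ² + b = 0, then F(x,β,1) = x⁴ for all x ∈ ℂ; i.e., the tangent line y = βz meets the curve C_{a,b,c} at [0:β:1] with contact order 4, so [0:β:1] is a hyperflex. -/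
theorem F_x_y_one_eq (a b c x y : ℂ) :
    F a b c x y 1 = x ^ 2 * (x ^ 2 + a * y ^ 2 + b) + (y ^ 4 + c * y ^ 2 + 1) := by
  unfold F
  ring

/-- Proposition 2.5 for the line `x = 0`: for `β⁴+cβ²+1=0`, `F(x,β,1) = x²(x²+aβ²+b)`;
if moreover `aβ²+b = 0`, then `F(x,β,1) = x⁴`, so the tangent line `y = βz` meets the
curve at `[0:β:1]` with contact order 4, i.e. `[0:β:1]` is a hyperflex. -/
theorem hyperflex_on_x_eq_zero (a b c β : ℂ) (hβ : β ^ 4 + c * β ^ 2 + 1 = 0) :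
    (∀ x : ℂ, F a b c x β 1 = x ^ 2 * (x ^ 2 + a * β ^ 2 + b)) ∧
    (a * β ^ 2 + b = 0 → ∀ x : ℂ, F a b c x β 1 = x ^ 4) := by
  have restrict (x : ℂ) : F a b c x β 1 = x ^ 2 * (x ^ 2 + a * β ^ 2 + b) := by
    rw [F_x_y_one_eq, hβ, add_zero]
  refine ⟨restrict, fun hab x => ?_⟩
  rw [restrict, add_assoc, hab, add_zero, ← pow_add]
end

section
/- (Hyperflex content of Theorem 2.8 on Γ₁₂.) Let a, b, c ∈ ℂ satisfy a² + b² − abc = 0 and a² + c² − abc = 0. Then there exist α, β ∈ ℂ with α ≠ 0 and β ≠ 0 such that β⁴ + cβ² + 1 = 0, aβ² + b = 0, α⁴ + bα² + 1 = 0 and aα² + c = 0; consequently F(x,β,1) = x⁴ for all x ∈ ℂ and F(α,y,1) = y⁴ for all y ∈ ℂ, and the four points [0:β:1], [0:−β:1], [α:0:1], [−α:0:1] are pairwise distinct points of ℙ²(ℂ) lying on the curve C_{a,b,c}, each of which is a hyperflex (its tangent line meets the curve there with contact order 4). -/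
open Polynomial in
theorem IsAlgClosed.exists_sq_add_mul_add_eq_zero {K : Type*} [Field K] [IsAlgClosed K]
    (p q : K) : ∃ t : K, t ^ 2 + p * t + q = 0 := by
  obtain ⟨t, ht⟩ := IsAlgClosed.exists_root (X ^ 2 + C p * X + C q) (by
    rw [show (X ^ 2 + C p * X + C q : K[X]).degree = 2 by compute_degree!]; decide)
  exact ⟨t, by simpa using ht⟩

theorem exists_common_root_of_sq_add_sq_sub_mul_eq_zero {K : Type*} [Field K] [IsAlgClosed K]
    {a b c : K} (h : a ^ 2 + b ^ 2 - a * b * c = 0) :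
    ∃ t : K, t ^ 2 + c * t + 1 = 0 ∧ a * t + b = 0 := by
  rcases eq_or_ne a 0 with rfl | ha
  · obtain rfl : b = 0 := pow_eq_zero_iff two_ne_zero |>.mp (by linear_combination h)
    obtain ⟨t, ht⟩ := IsAlgClosed.exists_sq_add_mul_add_eq_zero c 1
    exact ⟨t, ht, by ring⟩
  · have hroot : a * (-b / a) + b = 0 := by field_simp; ring
    refine ⟨-b / a, ?_, hroot⟩
    have : a ^ 2 * ((-b / a) ^ 2 + c * (-b / a) + 1) = 0 := by
      linear_combination h + (a * (-b / a) - b + a * c) * hroot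
    exact (mul_eq_zero.mp this).resolve_left (pow_ne_zero 2 ha)

theorem exists_biquadratic_root_of_sq_add_sq_sub_mul_eq_zero {K : Type*} [Field K] [IsAlgClosed K]
    {a b c : K} (h : a ^ 2 + b ^ 2 - a * b * c = 0) :
    ∃ β : K, β ≠ 0 ∧ β ^ 4 + c * β ^ 2 + 1 = 0 ∧ a * β ^ 2 + b = 0 := by
  obtain ⟨t, ht, hat⟩ := exists_common_root_of_sq_add_sq_sub_mul_eq_zero h
  obtain ⟨β, rfl⟩ := IsAlgClosed.exists_pow_nat_eq t two_pos
  refine ⟨β, ?_, by linear_combination ht, hat⟩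
  rintro rfl
  simp at ht

theorem F_swap_xy (a b c x y z : ℂ) : F a b c x y z = F a c b y x z := by
  unfold F; ring

theorem F_neg_x (a b c x y z : ℂ) : F a b c (-x) y z = F a b c x y z := by
  unfold F; ring

theorem F_neg_y (a b c x y z : ℂ) : F a b c x (-y) z = F a b c x y z := by
  unfold F; ring

theorem F_eq_pow_four {a b c β : ℂ} (h₁ : β ^ 4 + c * β ^ 2 + 1 = 0) (h₂ : a * β ^ 2 + b = 0)
    (x : ℂ) : F a b c x β 1 = x ^ 4 := by
  unfold F; linear_combination h₁ + x ^ 2 * h₂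

theorem prod_mk_one_ne_mul_of_ne {M : Type*} [MulOneClass M] {x y x' y' : M}
    (h : (x, y) ≠ (x', y')) (l : M) : (x, y, (1 : M)) ≠ (l * x', l * y', l * 1) := by
  intro heq
  simp only [Prod.mk.injEq, mul_one] at heq
  obtain ⟨hx, hy, rfl⟩ := heq
  simp_all

/-- Hyperflex content of Theorem 2.8 on `Γ₁₂`: if `a²+b²−abc = 0` and `a²+c²−abc = 0`,
then there are `α, β ≠ 0` with `β⁴+cβ²+1 = 0`, `aβ²+b = 0`, `α⁴+bα²+1 = 0`, `aα²+c = 0`,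
so `F(x,β,1) = x⁴` and `F(α,y,1) = y⁴`, and the four points `[0:±β:1]`, `[±α:0:1]` are
pairwise distinct points of `ℙ²(ℂ)` on the curve `C_{a,b,c}`, each a hyperflex. -/
theorem hyperflexes_on_Gamma12 (a b c : ℂ)
    (h1 : a ^ 2 + b ^ 2 - a * b * c = 0) (h2 : a ^ 2 + c ^ 2 - a * b * c = 0) :
    ∃ α β : ℂ, α ≠ 0 ∧ β ≠ 0 ∧
      β ^ 4 + c * β ^ 2 + 1 = 0 ∧ a * β ^ 2 + b = 0 ∧
      α ^ 4 + b * α ^ 2 + 1 = 0 ∧ a * α ^ 2 + c = 0 ∧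
      (∀ x : ℂ, F a b c x β 1 = x ^ 4) ∧
      (∀ y : ℂ, F a b c α y 1 = y ^ 4) ∧
      F a b c 0 β 1 = 0 ∧ F a b c 0 (-β) 1 = 0 ∧
      F a b c α 0 1 = 0 ∧ F a b c (-α) 0 1 = 0 ∧
      (∀ l : ℂ, ((0:ℂ), β, (1:ℂ)) ≠ (l * 0, l * (-β), l * 1)) ∧
      (∀ l : ℂ, ((0:ℂ), β, (1:ℂ)) ≠ (l * α, l * 0, l * 1)) ∧
      (∀ l : ℂ, ((0:ℂ), β, (1:ℂ)) ≠ (l * (-α), l * 0, l * 1)) ∧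
      (∀ l : ℂ, ((0:ℂ), -β, (1:ℂ)) ≠ (l * α, l * 0, l * 1)) ∧
      (∀ l : ℂ, ((0:ℂ), -β, (1:ℂ)) ≠ (l * (-α), l * 0, l * 1)) ∧
      (∀ l : ℂ, (α, (0:ℂ), (1:ℂ)) ≠ (l * (-α), l * 0, l * 1)) := by
  obtain ⟨β, hβ, hβ₁, hβ₂⟩ := exists_biquadratic_root_of_sq_add_sq_sub_mul_eq_zero h1
  obtain ⟨α, hα, hα₁, hα₂⟩ :=
    exists_biquadratic_root_of_sq_add_sq_sub_mul_eq_zero (a := a) (b := c) (c := b) (by linear_combination h2)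
  have hx : ∀ x, F a b c x β 1 = x ^ 4 := F_eq_pow_four hβ₁ hβ₂
  have hy : ∀ y, F a b c α y 1 = y ^ 4 := fun y => by
    rw [F_swap_xy]; exact F_eq_pow_four hα₁ hα₂ y
  refine ⟨α, β, hα, hβ, hβ₁, hβ₂, hα₁, hα₂, hx, hy, ?_, ?_, ?_, ?_, ?_⟩
  · simpa using hx 0
  · simpa [F_neg_y] using hx 0
  · simpa using hy 0
  · simpa [F_neg_x] using hy 0
  · refine ⟨?_, ?_, ?_, ?_, ?_, ?_⟩ <;> refine prod_mk_one_ne_mul_of_ne ?_ <;>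
      simp [hα, hβ, CharZero.eq_neg_self_iff]
end
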